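/- arXiv:math/0403479 — 5 statements merged into one kernel-verified Lean document; each statement's English description precedes it below -/
import Mathlib

section
/- Let $I$ be the standard complex structure on $\mathbb{R}^{2n}$ ($n \geq 2$) coming from the identification $\mathbb{R}^{2n} \cong \mathbb{C}^n$, and regard $U(n) = \{g \in SO(2n) : gI = Ig\}$. Let $a \in SO(2n)$ be such that for every nonzero $x \in \mathbb{R}^{2n}$ there exists $g \in U(n)$ (depending on $x$) with $a(x) = g(x)$ and $a(Ix) = g(Ix)$. Then $a \in U(n)$, i.e., $a$ commutes with $I$. -/
/-- If `a ∈ SO(2n)` agrees on each pair `{x, Ix}` with some element `g` of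
`U(n) = {g ∈ SO(2n) : gI = Ig}` (depending on `x`), then `a` commutes with `I`,
i.e. `a ∈ U(n)`.  Here `I` is the standard complex structure on `ℝ²ⁿ ≅ ℂⁿ`. -/
theorem stmt_4 (n : ℕ) (hn : 2 ≤ n)
    (I : Matrix (Fin n ⊕ Fin n) (Fin n ⊕ Fin n) ℝ)
    (hI : I = Matrix.fromBlocks 0 (-1) 1 0)
    (a : Matrix (Fin n ⊕ Fin n) (Fin n ⊕ Fin n) ℝ)
    (haO : a * a.transpose = 1) (haD : a.det = 1)
    (h : ∀ x : Fin n ⊕ Fin n → ℝ, x ≠ 0 →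
      ∃ g : Matrix (Fin n ⊕ Fin n) (Fin n ⊕ Fin n) ℝ,
        g * g.transpose = 1 ∧ g.det = 1 ∧ g * I = I * g ∧
        a.mulVec x = g.mulVec x ∧ a.mulVec (I.mulVec x) = g.mulVec (I.mulVec x)) :
    a * I = I * a := by
  have key : ∀ x : Fin n ⊕ Fin n → ℝ, (a * I).mulVec x = (I * a).mulVec x := by
    intro x
    by_cases hx : x = 0
    · simp [hx]
    · obtain ⟨g, _, _, hgI, hax, haIx⟩ := h x hx
      rw [Matrix.mulVec_mulVec, Matrix.mulVec_mulVec] at *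
      rw [haIx, hgI, ← Matrix.mulVec_mulVec, ← hax, Matrix.mulVec_mulVec]
  ext i j
  have := congrFun (key (Pi.single j 1)) i
  simpa [Matrix.mulVec_single] using this
end

section
/- Identify $\mathbb{H}^n \cong \mathbb{R}^{4n}$ and let $I, J, K$ be the orthogonal anticommuting complex structures given by right multiplication by $-i, -j, -k$. Let $a \in SO(4n)$ be such that for every nonzero $x \in \mathbb{R}^{4n}$ there exists $g \in Sp(n) = \{g \in SO(4n) : gI = Ig,\ gJ = Jg,\ gK = Kg\}$ (depending on $x$) with $a$ and $g$ agreeing on the subspace $\mathrm{span}\{x, Ix, Jx, Kx\}$. Then $a$ commutes with $I$, $J$, and $K$, i.e., $a \in Sp(n)$. -/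
open Kronecker

/-- The quaternionic structures `I, J, K` on `ℝ⁴ⁿ ≅ ℍⁿ` (right multiplication by
`-i, -j, -k`), written as block-diagonal matrices. -/
noncomputable def quatI (n : ℕ) : Matrix (Fin n × Fin 4) (Fin n × Fin 4) ℝ :=
  (1 : Matrix (Fin n) (Fin n) ℝ) ⊗ₖ !![0, 1, 0, 0; -1, 0, 0, 0; 0, 0, 0, -1; 0, 0, 1, 0]

noncomputable def quatJ (n : ℕ) : Matrix (Fin n × Fin 4) (Fin n × Fin 4) ℝ :=
  (1 : Matrix (Fin n) (Fin n) ℝ) ⊗ₖ !![0, 0, 1, 0; 0, 0, 0, 1; -1, 0, 0, 0; 0, -1, 0, 0]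

noncomputable def quatK (n : ℕ) : Matrix (Fin n × Fin 4) (Fin n × Fin 4) ℝ :=
  (1 : Matrix (Fin n) (Fin n) ℝ) ⊗ₖ !![0, 0, 0, 1; 0, 0, -1, 0; 0, 1, 0, 0; -1, 0, 0, 0]

/-- If `a ∈ SO(4n)` agrees on each subspace `span{x, Ix, Jx, Kx}` with some element of
`Sp(n) = {g ∈ SO(4n) : gI = Ig, gJ = Jg, gK = Kg}` (depending on `x`), then `a`
commutes with `I`, `J` and `K`, i.e. `a ∈ Sp(n)`. -/
theorem stmt_5 (n : ℕ) (hn : 1 ≤ n)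
    (a : Matrix (Fin n × Fin 4) (Fin n × Fin 4) ℝ)
    (haO : a * a.transpose = 1) (haD : a.det = 1)
    (h : ∀ x : Fin n × Fin 4 → ℝ, x ≠ 0 →
      ∃ g : Matrix (Fin n × Fin 4) (Fin n × Fin 4) ℝ,
        g * g.transpose = 1 ∧ g.det = 1 ∧
        g * quatI n = quatI n * g ∧ g * quatJ n = quatJ n * g ∧ g * quatK n = quatK n * g ∧
        a.mulVec x = g.mulVec x ∧
        a.mulVec ((quatI n).mulVec x) = g.mulVec ((quatI n).mulVec x) ∧
        a.mulVec ((quatJ n).mulVec x) = g.mulVec ((quatJ n).mulVec x) ∧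
        a.mulVec ((quatK n).mulVec x) = g.mulVec ((quatK n).mulVec x)) :
    a * quatI n = quatI n * a ∧ a * quatJ n = quatJ n * a ∧ a * quatK n = quatK n * a := by
  have key : ∀ A B : Matrix (Fin n × Fin 4) (Fin n × Fin 4) ℝ,
      (∀ v, A.mulVec v = B.mulVec v) → A = B := by
    intro A B hv
    ext i j
    have := congrFun (hv (Pi.single j 1)) i
    simpa [Matrix.mulVec_single] using this
  refine ⟨?_, ?_, ?_⟩ <;>
  · apply key
    intro v
    rcases eq_or_ne v 0 with rfl | hv
    · simp
    · obtain ⟨g, -, -, hI, hJ, hK, hx, hxI, hxJ, hxK⟩ := h v hv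
      simp only [Matrix.mulVec_mulVec] at hxI hxJ hxK
      first
      | rw [hxI, hI, ← Matrix.mulVec_mulVec, ← hx, Matrix.mulVec_mulVec]
      | rw [hxJ, hJ, ← Matrix.mulVec_mulVec, ← hx, Matrix.mulVec_mulVec]
      | rw [hxK, hK, ← Matrix.mulVec_mulVec, ← hx, Matrix.mulVec_mulVec]
end

section
/- Identify $\mathbb{H}^n \cong \mathbb{R}^{4n}$ ($n \geq 2$) and define $Sp(n)Sp(1) = \{g \in SO(4n) : g \cdot \mathrm{span}\{I,J,K\} = \mathrm{span}\{I,J,K\}\}$ (conjugation action on endomorphisms). Let $a \in SO(4n)$ be such that for every nonzero $x \in \mathbb{R}^{4n}$, every $L \in \mathrm{span}\{I,J,K\}$ with $L^2 = -1$, and every $y \perp \mathrm{span}\{x, Lx\}$, there exists $g \in Sp(n)Sp(1)$ agreeing with $a$ on $\mathrm{span}\{x, Lx, y, Ly\}$. Then $a \in Sp(n)Sp(1)$, i.e., $a L a^{-1} \in \mathrm{span}\{I,J,K\}$ for all $L \in \mathrm{span}\{I,J,K\}$. -/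
open Kronecker

/-- The span of the quaternionic structures `I, J, K` inside the matrix algebra. -/
noncomputable def quatSpan (n : ℕ) : Submodule ℝ (Matrix (Fin n × Fin 4) (Fin n × Fin 4) ℝ) :=
  Submodule.span ℝ {quatI n, quatJ n, quatK n}

/-- Membership in `Sp(n)Sp(1) = {g ∈ SO(4n) : g·span{I,J,K}·g⁻¹ = span{I,J,K}}`. -/
noncomputable def memSpnSp1 (n : ℕ) (g : Matrix (Fin n × Fin 4) (Fin n × Fin 4) ℝ) : Prop :=
  g * g.transpose = 1 ∧ g.det = 1 ∧ ∀ L ∈ quatSpan n, g * L * g⁻¹ ∈ quatSpan n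

/-! Every `L = αI + βJ + γK` satisfies `L² = -(α² + β² + γ²)`, so an element of `span{I,J,K}` is
determined by its value on a single nonzero vector. For `L ∈ {I, J, K}` and standard basis vectors
`x, y` in different quaternionic lines we have `y ⟂ x, Lx`, and the hypothesis yields
`Q = gLg⁻¹ ∈ span{I,J,K}` with `Q(ax) = a(Lx)` and `Q(ay) = a(Ly)`. As `n ≥ 2`, every basis
vector can be paired with one of two fixed basis vectors `x₀, x₁` from different lines, so by
uniqueness all these `Q` equal the one obtained from `(x₀, x₁)`. Hence `aL = Pa` with
`P ∈ span{I,J,K}`, and the conjugation `L ↦ aLa⁻¹` preserves the span by linearity. -/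

open Matrix

/-- The `4 × 4` block of `α I + β J + γ K`. -/
def quatBlock (α β γ : ℝ) : Matrix (Fin 4) (Fin 4) ℝ :=
  !![0, α, β, γ; -α, 0, -γ, β; -β, γ, 0, -α; -γ, -β, α, 0]

lemma quatBlock_mul_self (α β γ : ℝ) :
    quatBlock α β γ * quatBlock α β γ = -((α ^ 2 + β ^ 2 + γ ^ 2) • 1) := by
  ext i j
  fin_cases i <;> fin_cases j <;> simp [quatBlock, mul_apply, Fin.sum_univ_four] <;> ring

section
variable {n : ℕ}

lemma smul_quatI_add_smul_quatJ_add_smul_quatK (α β γ : ℝ) :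
    α • quatI n + β • quatJ n + γ • quatK n = 1 ⊗ₖ quatBlock α β γ := by
  simp only [quatI, quatJ, quatK, ← kronecker_smul, ← kronecker_add]
  congr 1
  ext i j
  fin_cases i <;> fin_cases j <;> simp [quatBlock]

lemma exists_eq_kronecker_quatBlock {L : Matrix (Fin n × Fin 4) (Fin n × Fin 4) ℝ}
    (hL : L ∈ quatSpan n) : ∃ α β γ : ℝ, L = 1 ⊗ₖ quatBlock α β γ := by
  obtain ⟨α, β, γ, rfl⟩ := Submodule.mem_span_triple.mp hL
  exact ⟨α, β, γ, smul_quatI_add_smul_quatJ_add_smul_quatK α β γ⟩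

lemma kronecker_quatBlock_mul_self (α β γ : ℝ) :
    (1 ⊗ₖ quatBlock α β γ : Matrix (Fin n × Fin 4) (Fin n × Fin 4) ℝ) * (1 ⊗ₖ quatBlock α β γ)
      = -((α ^ 2 + β ^ 2 + γ ^ 2) • 1) := by
  rw [← mul_kronecker_mul, one_mul, quatBlock_mul_self, ← neg_smul, kronecker_smul,
    one_kronecker_one, neg_smul]

lemma mul_self_eq_neg_one_of_mem_quatIJK {L : Matrix (Fin n × Fin 4) (Fin n × Fin 4) ℝ}
    (hL : L ∈ ({quatI n, quatJ n, quatK n} : Set _)) : L * L = -1 := by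
  obtain ⟨α, β, γ, hL, hsq⟩ : ∃ α β γ : ℝ, L = α • quatI n + β • quatJ n + γ • quatK n ∧
      α ^ 2 + β ^ 2 + γ ^ 2 = 1 := by
    rcases hL with rfl | rfl | rfl
    exacts [⟨1, 0, 0, by simp, by norm_num⟩, ⟨0, 1, 0, by simp, by norm_num⟩,
      ⟨0, 0, 1, by simp, by norm_num⟩]
  rw [hL, smul_quatI_add_smul_quatJ_add_smul_quatK, kronecker_quatBlock_mul_self, hsq, one_smul]

lemma eq_zero_of_mem_quatSpan_of_mulVec_eq_zero {L : Matrix (Fin n × Fin 4) (Fin n × Fin 4) ℝ}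
    (hL : L ∈ quatSpan n) {v : Fin n × Fin 4 → ℝ} (hv : v ≠ 0) (hLv : L *ᵥ v = 0) : L = 0 := by
  obtain ⟨α, β, γ, rfl⟩ := exists_eq_kronecker_quatBlock hL
  have hsq : (α ^ 2 + β ^ 2 + γ ^ 2) • v = 0 :=
    calc (α ^ 2 + β ^ 2 + γ ^ 2) • v
        = -((1 ⊗ₖ quatBlock α β γ * 1 ⊗ₖ quatBlock α β γ) *ᵥ v) := by
          rw [kronecker_quatBlock_mul_self, neg_mulVec, neg_neg, smul_mulVec, one_mulVec]
      _ = 0 := by rw [← mulVec_mulVec, hLv, mulVec_zero, neg_zero]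
  have hnorm : α ^ 2 + β ^ 2 + γ ^ 2 = 0 := (smul_eq_zero.mp hsq).resolve_right hv
  obtain ⟨rfl, rfl, rfl⟩ : α = 0 ∧ β = 0 ∧ γ = 0 := by
    refine ⟨?_, ?_, ?_⟩ <;> nlinarith [hnorm, sq_nonneg α, sq_nonneg β, sq_nonneg γ]
  rw [← smul_quatI_add_smul_quatJ_add_smul_quatK]
  simp

lemma eq_of_mem_quatSpan_of_mulVec_eq {P Q : Matrix (Fin n × Fin 4) (Fin n × Fin 4) ℝ}
    (hP : P ∈ quatSpan n) (hQ : Q ∈ quatSpan n) {v : Fin n × Fin 4 → ℝ} (hv : v ≠ 0)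
    (hPQ : P *ᵥ v = Q *ᵥ v) : P = Q :=
  sub_eq_zero.mp <| eq_zero_of_mem_quatSpan_of_mulVec_eq_zero (Submodule.sub_mem _ hP hQ) hv
    (by rw [sub_mulVec, hPQ, sub_self])

lemma single_dotProduct_mulVec_single_eq_zero {L : Matrix (Fin n × Fin 4) (Fin n × Fin 4) ℝ}
    (hL : L ∈ quatSpan n) {i j : Fin n} (hij : i ≠ j) (s t : Fin 4) :
    Pi.single (j, t) 1 ⬝ᵥ (L *ᵥ Pi.single (i, s) 1) = 0 := by
  obtain ⟨α, β, γ, rfl⟩ := exists_eq_kronecker_quatBlock hL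
  simp [one_apply_ne hij.symm]

lemma exists_mem_quatSpan_mul_eq_mul (hn : 2 ≤ n) {a L : Matrix (Fin n × Fin 4) (Fin n × Fin 4) ℝ}
    (ha : Function.Injective a.mulVec)
    (hloc : ∀ i j : Fin n, i ≠ j → ∀ s t : Fin 4, ∃ Q ∈ quatSpan n,
      Q *ᵥ (a *ᵥ Pi.single (i, s) 1) = a *ᵥ (L *ᵥ Pi.single (i, s) 1) ∧
      Q *ᵥ (a *ᵥ Pi.single (j, t) 1) = a *ᵥ (L *ᵥ Pi.single (j, t) 1)) :
    ∃ P ∈ quatSpan n, a * L = P * a := by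
  obtain ⟨i₀, i₁, hi⟩ := (Fin.nontrivial_iff_two_le.mpr hn).exists_pair_ne
  obtain ⟨P, hP, hP₀, hP₁⟩ := hloc i₀ i₁ hi 0 0
  have hother : ∀ j, ∃ k ≠ j,
      P *ᵥ (a *ᵥ Pi.single (k, 0) 1) = a *ᵥ (L *ᵥ Pi.single (k, 0) 1) := by
    intro j
    by_cases hj : j = i₀
    · exact ⟨i₁, hj ▸ hi.symm, hP₁⟩
    · exact ⟨i₀, Ne.symm hj, hP₀⟩
  refine ⟨P, hP, ext_of_mulVec_single fun ⟨j, t⟩ => ?_⟩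
  obtain ⟨k, hkj, hk⟩ := hother j
  obtain ⟨Q, hQ, hQk, hQj⟩ := hloc k j hkj 0 t
  have hQP : Q = P := by
    refine eq_of_mem_quatSpan_of_mulVec_eq hQ hP ?_ (hQk.trans hk.symm)
    simpa using ha.ne (Pi.single_ne_zero_iff.mpr one_ne_zero)
  rw [← mulVec_mulVec, ← mulVec_mulVec, ← hQj, hQP]

end

lemma conj_mulVec_eq_of_mulVec_eq {m : Type*} [Fintype m] [DecidableEq m] {a g L : Matrix m m ℝ}
    (hg : IsUnit g.det) {x : m → ℝ} (hx : a *ᵥ x = g *ᵥ x)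
    (hLx : a *ᵥ (L *ᵥ x) = g *ᵥ (L *ᵥ x)) : (g * L * g⁻¹) *ᵥ (a *ᵥ x) = a *ᵥ (L *ᵥ x) := by
  rw [hx, hLx, mulVec_mulVec, Matrix.mul_assoc, nonsing_inv_mul _ hg, Matrix.mul_one,
    mulVec_mulVec]

/-- If `a ∈ SO(4n)` (`n ≥ 2`) agrees, for every `x ≠ 0`, every complex structure
`L ∈ span{I,J,K}` with `L² = -1`, and every `y ⟂ span{x, Lx}`, with some element of
`Sp(n)Sp(1)` on `span{x, Lx, y, Ly}`, then `a ∈ Sp(n)Sp(1)`. -/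
theorem stmt_14 (n : ℕ) (hn : 2 ≤ n)
    (a : Matrix (Fin n × Fin 4) (Fin n × Fin 4) ℝ)
    (haO : a * a.transpose = 1) (haD : a.det = 1)
    (h : ∀ x : Fin n × Fin 4 → ℝ, x ≠ 0 →
      ∀ L ∈ quatSpan n, L * L = -1 →
      ∀ y : Fin n × Fin 4 → ℝ,
        (∑ i, y i * x i = 0) → (∑ i, y i * L.mulVec x i = 0) →
        ∃ g, memSpnSp1 n g ∧
          a.mulVec x = g.mulVec x ∧
          a.mulVec (L.mulVec x) = g.mulVec (L.mulVec x) ∧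
          a.mulVec y = g.mulVec y ∧
          a.mulVec (L.mulVec y) = g.mulVec (L.mulVec y)) :
    memSpnSp1 n a := by
  have hdet : IsUnit a.det := haD ▸ isUnit_one
  have hconj : ∀ L ∈ ({quatI n, quatJ n, quatK n} : Set _), a * L * a⁻¹ ∈ quatSpan n := by
    intro L hLIJK
    have hL : L ∈ quatSpan n := Submodule.subset_span hLIJK
    obtain ⟨P, hP, haL⟩ := exists_mem_quatSpan_mul_eq_mul hn
      (mulVec_injective_iff_isUnit.mpr ((isUnit_iff_isUnit_det a).mpr hdet))
      fun i j hij s t => by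
        obtain ⟨g, hg, hx, hLx, hy, hLy⟩ := h _ (Pi.single_ne_zero_iff.mpr one_ne_zero) L hL
          (mul_self_eq_neg_one_of_mem_quatIJK hLIJK) (Pi.single (j, t) 1)
          (show Pi.single (j, t) 1 ⬝ᵥ Pi.single (i, s) 1 = 0 by simp [hij.symm])
          (single_dotProduct_mulVec_single_eq_zero hL hij s t)
        have hg' : IsUnit g.det := hg.2.1 ▸ isUnit_one
        exact ⟨g * L * g⁻¹, hg.2.2 L hL, conj_mulVec_eq_of_mulVec_eq hg' hx hLx,
          conj_mulVec_eq_of_mulVec_eq hg' hy hLy⟩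
    rwa [haL, Matrix.mul_assoc, mul_nonsing_inv _ hdet, Matrix.mul_one]
  have hspan :
      quatSpan n ≤ (quatSpan n).comap (LinearMap.mulRight ℝ a⁻¹ ∘ₗ LinearMap.mulLeft ℝ a) :=
    Submodule.span_le.mpr hconj
  exact ⟨haO, haD, fun L hL => hspan hL⟩
end

section
/- Let $I_1, \dots, I_9$ be self-adjoint endomorphisms of $\mathbb{R}^{16}$ satisfying $I_\alpha^2 = 1$ and $I_\alpha I_\beta = -I_\beta I_\alpha$ for $\alpha \neq \beta$ (generators of $Cl(\mathbb{R}^9)$ on its real spinor representation). Then for any unit vector $x \in \mathbb{R}^{16}$, the endomorphism $I = \sum_{\alpha=1}^9 \langle I_\alpha x, x\rangle I_\alpha$ is the unique element of $\mathrm{span}\{I_1, \dots, I_9\}$ with $I^2 = 1$ (up to sign) satisfying $Ix = x$. -/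
/-!
Split `x = a + b` into eigenvectors of `J = I₉` for the eigenvalues `1` and `-1`. The vectors
`I_i a` (`i ≤ 8`) are orthogonal of length `|a|` and lie in the `-1`-eigenspace; with their images
under `I₁` they are 16 orthogonal vectors of `ℝ¹⁶`, so Parseval gives
`∑_{i ≤ 8} ⟨I_i a, b⟩² = |a|² |b|²`, whence `∑_α ⟨I_α x, x⟩² = (|a|² - |b|²)² + 4 |a|² |b|² = |x|⁴`.
For `L_c = ∑ c_α I_α` the Clifford relations give `L_c² = |c|²`, and `⟨L_c x, x⟩ = ⟨c, v⟩` with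
`v_α = ⟨I_α x, x⟩`. As `v` is a unit vector, both `L_v x = x` and uniqueness are the equality case
of Cauchy–Schwarz for unit vectors.
-/

open Matrix Finset

section DotProduct

variable {n : Type*} [Fintype n]

lemma Matrix.mulVec_dotProduct_of_transpose_eq {M : Matrix n n ℝ} (hM : Mᵀ = M) (u w : n → ℝ) :
    (M *ᵥ u) ⬝ᵥ w = u ⬝ᵥ (M *ᵥ w) := by
  rw [dotProduct_mulVec, ← vecMul_transpose, hM]

lemma Matrix.dotProduct_eq_zero_of_mulVec_eq_self_of_mulVec_eq_neg {J : Matrix n n ℝ}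
    (hJ : Jᵀ = J) {u w : n → ℝ} (hu : J *ᵥ u = u) (hw : J *ᵥ w = -w) : u ⬝ᵥ w = 0 := by
  have h := J.mulVec_dotProduct_of_transpose_eq hJ u w
  rw [hu, hw, dotProduct_neg] at h
  linarith

lemma Matrix.mulVec_mulVec_of_anticomm {A B : Matrix n n ℝ} (h : A * B = -(B * A)) (u : n → ℝ) :
    A *ᵥ (B *ᵥ u) = -(B *ᵥ (A *ᵥ u)) := by
  rw [mulVec_mulVec, mulVec_mulVec, h, neg_mulVec]

lemma eq_of_dotProduct_self_eq_one {u w : n → ℝ} (hu : u ⬝ᵥ u = 1) (hw : w ⬝ᵥ w = 1)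
    (huw : u ⬝ᵥ w = 1) : u = w := by
  have h : (u - w) ⬝ᵥ (u - w) = 0 := by
    simp only [sub_dotProduct, dotProduct_sub, dotProduct_comm w u, hu, hw, huw]
    norm_num
  exact sub_eq_zero.mp (dotProduct_self_eq_zero.mp h)

lemma sum_sq_dotProduct_of_orthogonal {m : Type*} [Fintype m] [DecidableEq m] [DecidableEq n]
    (hcard : Fintype.card m = Fintype.card n) (e : m → n → ℝ) (s : ℝ)
    (he : ∀ k l, e k ⬝ᵥ e l = if k = l then s else 0) (b : n → ℝ) :
    ∑ k, (e k ⬝ᵥ b) ^ 2 = s * (b ⬝ᵥ b) := by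
  rcases eq_or_ne s 0 with rfl | hs
  · have : ∀ k, e k = 0 := fun k => dotProduct_self_eq_zero.mp (by simpa using he k k)
    simp [this]
  set E : Matrix m n ℝ := Matrix.of e
  have hEE : (s⁻¹ • E) * Eᵀ = 1 := by
    ext k l
    rw [smul_mul, Matrix.smul_apply, Matrix.mul_apply', Matrix.one_apply]
    change s⁻¹ • (e k ⬝ᵥ e l) = _
    rw [he]
    split_ifs <;> simp [hs]
  have hEtE : Eᵀ * E = s • 1 := by
    have := (mul_eq_one_comm_of_equiv (Fintype.equivOfCardEq hcard)).mp hEE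
    rw [Matrix.mul_smul, inv_smul_eq_iff₀ hs] at this
    exact this
  calc ∑ k, (e k ⬝ᵥ b) ^ 2 = (E *ᵥ b) ⬝ᵥ (E *ᵥ b) := by simp [dotProduct, sq, E, mulVec]
    _ = b ⬝ᵥ ((Eᵀ * E) *ᵥ b) := by
      rw [← mulVec_mulVec, dotProduct_mulVec b, vecMul_transpose]
    _ = s * (b ⬝ᵥ b) := by rw [hEtE, smul_mulVec, one_mulVec, dotProduct_smul, smul_eq_mul]

lemma Matrix.sum_smul_mulVec_dotProduct {ι : Type*} [Fintype ι]
    (P : ι → Matrix n n ℝ) (c : ι → ℝ) (x : n → ℝ) :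
    ((∑ i, c i • P i) *ᵥ x) ⬝ᵥ x = c ⬝ᵥ fun i => (P i *ᵥ x) ⬝ᵥ x := by
  rw [sum_mulVec, sum_dotProduct]
  simp only [smul_mulVec, smul_dotProduct, smul_eq_mul]
  rfl

end DotProduct

structure Matrix.IsCliffordSystem {ι n : Type*} [Fintype n] [DecidableEq n]
    (P : ι → Matrix n n ℝ) : Prop where
  transpose_eq : ∀ i, (P i).transpose = P i
  mul_self : ∀ i, P i * P i = 1
  anticomm : ∀ i j, i ≠ j → P i * P j = -(P j * P i)

namespace Matrix.IsCliffordSystem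

variable {ι n : Type*} [Fintype n] [DecidableEq n]

section

variable {P : ι → Matrix n n ℝ} (hP : IsCliffordSystem P)
include hP

lemma comp {κ : Type*} {f : κ → ι} (hf : Function.Injective f) : IsCliffordSystem (P ∘ f) :=
  ⟨fun i => hP.transpose_eq (f i), fun i => hP.mul_self (f i),
    fun i j hij => hP.anticomm (f i) (f j) (hf.ne hij)⟩

lemma mulVec_dotProduct_mulVec_self (i : ι) (u w : n → ℝ) :
    (P i *ᵥ u) ⬝ᵥ (P i *ᵥ w) = u ⬝ᵥ w := by
  rw [mulVec_dotProduct_of_transpose_eq (hP.transpose_eq i), mulVec_mulVec, hP.mul_self,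
    one_mulVec]

lemma mulVec_dotProduct_mulVec [DecidableEq ι] (i j : ι) (u : n → ℝ) :
    (P i *ᵥ u) ⬝ᵥ (P j *ᵥ u) = if i = j then u ⬝ᵥ u else 0 := by
  split_ifs with hij
  · rw [hij, hP.mulVec_dotProduct_mulVec_self]
  have h : ∀ k l, (P k *ᵥ u) ⬝ᵥ (P l *ᵥ u) = u ⬝ᵥ ((P k * P l) *ᵥ u) := fun k l => by
    rw [mulVec_dotProduct_of_transpose_eq (hP.transpose_eq k), mulVec_mulVec]
  have hswap := h j i
  rw [dotProduct_comm, hP.anticomm j i (Ne.symm hij), neg_mulVec, dotProduct_neg, ← h] at hswap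
  linarith

lemma transpose_sum_smul [Fintype ι] (c : ι → ℝ) :
    (∑ i, c i • P i)ᵀ = ∑ i, c i • P i := by
  simp only [transpose_sum, transpose_smul, hP.transpose_eq]

lemma sum_smul_mul_self [Fintype ι] [DecidableEq ι] (c : ι → ℝ) :
    (∑ i, c i • P i) * (∑ i, c i • P i) = (∑ i, c i ^ 2) • 1 := by
  have hpair : ∀ i j, (c i * c j) • (P i * P j) + (c j * c i) • (P j * P i)
      = if i = j then (2 * c i ^ 2) • (1 : Matrix n n ℝ) else 0 := by
    intro i j
    split_ifs with hij
    · rw [hij, hP.mul_self, ← add_smul]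
      congr 1
      ring
    · rw [hP.anticomm i j hij, mul_comm, smul_neg, neg_add_cancel]
  have hexpand : (∑ i, c i • P i) * (∑ i, c i • P i) = ∑ i, ∑ j, (c i * c j) • (P i * P j) := by
    simp only [sum_mul_sum, smul_mul_smul_comm]
  refine smul_right_injective _ (two_ne_zero (α := ℝ)) ?_
  calc (2 : ℝ) • ((∑ i, c i • P i) * (∑ i, c i • P i))
      = ∑ i, ∑ j, ((c i * c j) • (P i * P j) + (c j * c i) • (P j * P i)) := by
        rw [two_smul, hexpand]
        nth_rewrite 2 [sum_comm]
        simp only [← sum_add_distrib]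
    _ = (2 : ℝ) • ((∑ i, c i ^ 2) • 1) := by
        simp only [hpair, sum_ite_eq, mem_univ, if_true]
        rw [← sum_smul, ← mul_sum, mul_smul]

lemma sum_sq_mulVec_dotProduct_of_mulVec_eq [Fintype ι] [DecidableEq ι] [Nonempty ι]
    (hcard : Fintype.card n = 2 * Fintype.card ι) {J : Matrix n n ℝ} (hJ : Jᵀ = J)
    (hPJ : ∀ i, P i * J = -(J * P i)) {a b : n → ℝ} (ha : J *ᵥ a = a) (hb : J *ᵥ b = -b) :
    ∑ i, ((P i *ᵥ a) ⬝ᵥ b) ^ 2 = (a ⬝ᵥ a) * (b ⬝ᵥ b) := by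
  obtain ⟨i₀⟩ := ‹Nonempty ι›
  have hJP : ∀ i w, J *ᵥ (P i *ᵥ w) = -(P i *ᵥ (J *ᵥ w)) := fun i =>
    mulVec_mulVec_of_anticomm (neg_eq_iff_eq_neg.mp (hPJ i).symm)
  have hodd : ∀ i, J *ᵥ (P i *ᵥ a) = -(P i *ᵥ a) := fun i => by rw [hJP, ha]
  have heven : ∀ i, J *ᵥ (P i₀ *ᵥ (P i *ᵥ a)) = P i₀ *ᵥ (P i *ᵥ a) := fun i => by
    rw [hJP, hodd, mulVec_neg, neg_neg]
  have hperp : ∀ {u w}, J *ᵥ u = u → J *ᵥ w = -w → u ⬝ᵥ w = 0 :=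
    dotProduct_eq_zero_of_mulVec_eq_self_of_mulVec_eq_neg hJ
  -- `P i₀` maps the `-1`-eigenvectors `P i a` of `J` to `+1`-eigenvectors; together they form
  -- an orthogonal family of `card n` vectors, to which Parseval applies.
  let e : ι ⊕ ι → n → ℝ := Sum.elim (fun i => P i₀ *ᵥ (P i *ᵥ a)) (fun i => P i *ᵥ a)
  have he : ∀ k l, e k ⬝ᵥ e l = if k = l then a ⬝ᵥ a else 0 := by
    rintro (i | i) (j | j)
    · simp only [e, Sum.elim_inl, hP.mulVec_dotProduct_mulVec_self, hP.mulVec_dotProduct_mulVec,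
        Sum.inl.injEq]
    · simp only [e, Sum.elim_inl, Sum.elim_inr, hperp (heven i) (hodd j), reduceCtorEq, if_false]
    · simp only [e, Sum.elim_inl, Sum.elim_inr, reduceCtorEq, if_false]
      rw [dotProduct_comm, hperp (heven j) (hodd i)]
    · simp only [e, Sum.elim_inr, hP.mulVec_dotProduct_mulVec, Sum.inr.injEq]
  have hparseval := sum_sq_dotProduct_of_orthogonal (by simp [hcard, two_mul]) e _ he b
  have hinl : ∀ i, (P i₀ *ᵥ (P i *ᵥ a)) ⬝ᵥ b = 0 := fun i => hperp (heven i) hb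
  simpa only [e, Fintype.sum_sum_type, Sum.elim_inl, Sum.elim_inr, hinl, ne_eq,
    OfNat.ofNat_ne_zero, not_false_eq_true, zero_pow, sum_const_zero, zero_add] using hparseval

end

lemma sum_sq_mulVec_dotProduct {m : ℕ} [NeZero m] {P : Fin (m + 1) → Matrix n n ℝ}
    (hP : IsCliffordSystem P) (hcard : Fintype.card n = 2 * m) (x : n → ℝ) :
    ∑ α, ((P α *ᵥ x) ⬝ᵥ x) ^ 2 = (x ⬝ᵥ x) ^ 2 := by
  set J := P (Fin.last m)
  set Q := P ∘ Fin.castSucc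
  have hQ : IsCliffordSystem Q := hP.comp (Fin.castSucc_injective m)
  have hJ : Jᵀ = J := hP.transpose_eq _
  have hQJ : ∀ i, Q i * J = -(J * Q i) := fun i => hP.anticomm _ _ (Fin.castSucc_ne_last i)
  set a := (1 / 2 : ℝ) • (x + J *ᵥ x)
  set b := (1 / 2 : ℝ) • (x - J *ᵥ x)
  have hJJx : J *ᵥ (J *ᵥ x) = x := by rw [mulVec_mulVec, hP.mul_self, one_mulVec]
  have ha : J *ᵥ a = a := by rw [mulVec_smul, mulVec_add, hJJx, add_comm]
  have hb : J *ᵥ b = -b := by rw [mulVec_smul, mulVec_sub, hJJx, ← smul_neg, neg_sub]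
  have hx : x = a + b := by
    rw [← smul_add, add_add_sub_cancel, ← two_smul ℝ x, smul_smul]
    norm_num
  have hperp : ∀ {u w}, J *ᵥ u = u → J *ᵥ w = -w → u ⬝ᵥ w = 0 :=
    dotProduct_eq_zero_of_mulVec_eq_self_of_mulVec_eq_neg hJ
  have hJQ : ∀ i w, J *ᵥ (Q i *ᵥ w) = -(Q i *ᵥ (J *ᵥ w)) := fun i =>
    mulVec_mulVec_of_anticomm (neg_eq_iff_eq_neg.mp (hQJ i).symm)
  have hab : a ⬝ᵥ b = 0 := hperp ha hb
  have hJx : (J *ᵥ x) ⬝ᵥ x = a ⬝ᵥ a - b ⬝ᵥ b := by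
    rw [hx, mulVec_add, ha, hb, add_dotProduct, dotProduct_add, dotProduct_add, hab,
      neg_dotProduct, neg_dotProduct, dotProduct_comm b a, hab]
    ring
  have hQx : ∀ i, (Q i *ᵥ x) ⬝ᵥ x = 2 * ((Q i *ᵥ a) ⬝ᵥ b) := fun i => by
    have haa : (Q i *ᵥ a) ⬝ᵥ a = 0 := by
      rw [dotProduct_comm]; exact hperp ha (by rw [hJQ, ha])
    have hbb : (Q i *ᵥ b) ⬝ᵥ b = 0 := hperp (by rw [hJQ, hb, mulVec_neg, neg_neg]) hb
    rw [hx, mulVec_add, add_dotProduct, dotProduct_add, dotProduct_add, haa, hbb,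
      mulVec_dotProduct_of_transpose_eq (hQ.transpose_eq i) b, dotProduct_comm b]
    ring
  have hxx : x ⬝ᵥ x = a ⬝ᵥ a + b ⬝ᵥ b := by
    rw [hx, add_dotProduct, dotProduct_add, dotProduct_add, hab, dotProduct_comm b a, hab]
    ring
  have key := hQ.sum_sq_mulVec_dotProduct_of_mulVec_eq (by simpa using hcard) hJ hQJ ha hb
  rw [Fin.sum_univ_castSucc]
  change ∑ i, ((Q i *ᵥ x) ⬝ᵥ x) ^ 2 + ((J *ᵥ x) ⬝ᵥ x) ^ 2 = _
  simp only [hQx, hJx, hxx, mul_pow, ← mul_sum, key]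
  ring

end Matrix.IsCliffordSystem

/-- Let `I₁, …, I₉` be self-adjoint anticommuting involutions of `ℝ¹⁶` (Clifford
generators of `Cl(ℝ⁹)` on its real spinor representation).  For any unit vector
`x ∈ ℝ¹⁶`, the endomorphism `I = ∑_α ⟨I_α x, x⟩ I_α` satisfies `I² = 1` and `Ix = x`,
and is the unique element of `span{I₁,…,I₉}` with these properties. -/
theorem stmt_16 (I : Fin 9 → Matrix (Fin 16) (Fin 16) ℝ)
    (hsym : ∀ α, (I α).transpose = I α)
    (hsq : ∀ α, I α * I α = 1)
    (hanti : ∀ α β, α ≠ β → I α * I β = -(I β * I α))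
    (x : Fin 16 → ℝ) (hx : ∑ i, x i ^ 2 = 1) :
    (∑ α, (∑ i, (I α).mulVec x i * x i) • I α) * (∑ α, (∑ i, (I α).mulVec x i * x i) • I α) = 1 ∧
    (∑ α, (∑ i, (I α).mulVec x i * x i) • I α).mulVec x = x ∧
    ∀ c : Fin 9 → ℝ, (∑ α, c α • I α) * (∑ α, c α • I α) = 1 →
      (∑ α, c α • I α).mulVec x = x →
      (∑ α, c α • I α) = ∑ α, (∑ i, (I α).mulVec x i * x i) • I α := by
  have hI : IsCliffordSystem I := ⟨hsym, hsq, hanti⟩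
  have hxx : x ⬝ᵥ x = 1 := by simpa only [dotProduct, sq] using hx
  set v : Fin 9 → ℝ := fun α => (I α *ᵥ x) ⬝ᵥ x
  change (∑ α, v α • I α) * (∑ α, v α • I α) = 1 ∧ (∑ α, v α • I α) *ᵥ x = x ∧
    ∀ c : Fin 9 → ℝ, (∑ α, c α • I α) * (∑ α, c α • I α) = 1 →
      (∑ α, c α • I α) *ᵥ x = x → (∑ α, c α • I α) = ∑ α, v α • I α
  have hvv : v ⬝ᵥ v = 1 := by
    have h := hI.sum_sq_mulVec_dotProduct (by simp) x
    rw [hxx, one_pow] at h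
    exact (sum_congr rfl fun α _ => (sq (v α)).symm).trans h
  have hsq_one : ∀ c : Fin 9 → ℝ, (∑ α, c α • I α) * (∑ α, c α • I α) = 1 ↔ c ⬝ᵥ c = 1 := by
    intro c
    rw [hI.sum_smul_mul_self, show ∑ α, c α ^ 2 = c ⬝ᵥ c from sum_congr rfl fun α _ => sq (c α)]
    exact ⟨fun h => smul_left_injective ℝ one_ne_zero (h.trans (one_smul ℝ 1).symm),
      fun h => by rw [h, one_smul]⟩
  have hvL : (∑ α, v α • I α) * (∑ α, v α • I α) = 1 := (hsq_one v).mpr hvv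
  refine ⟨hvL, ?_, fun c hc hcx => ?_⟩
  · refine eq_of_dotProduct_self_eq_one ?_ hxx ?_
    · rw [mulVec_dotProduct_of_transpose_eq (hI.transpose_sum_smul v), mulVec_mulVec, hvL,
        one_mulVec, hxx]
    · rw [sum_smul_mulVec_dotProduct, hvv]
  · have hcv : c ⬝ᵥ v = 1 := by rw [← sum_smul_mulVec_dotProduct, hcx, hxx]
    rw [eq_of_dotProduct_self_eq_one ((hsq_one c).mp hc) hvv hcv]
end

section
/- Fix $r \in (0,1)$, $s = \sqrt{1-r^2}$. For the loop $x_t = (r\cos t, r\sin t, 0, s, 0, 0, 0, 0)$ on $S^7$, let $Z_0 = (-r^3 s, 0, 0, r^4, r^3 s, 0, 0, r^2 s^2)$. Then the solution of the parallel transport ODE $\frac{dZ_t}{dt} = -\langle \dot{x}_t, Z_t\rangle x_t$ with initial value $Z_0$ satisfies: the fifth coordinate of $Z_t$ is constantly $r^3 s$, and the fourth coordinate of $Z_t$ equals $r^4 \cos(st)$; in particular the fourth coordinate of $Z_{2\pi}$ is $r^4\cos(2\pi s) \neq r^4$. -/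
open Real

/-!
Write `f = ⟨ẋ, Z⟩` and `g = r cos t · Z₀ + r sin t · Z₁`. The transport equation
`Z' = -f x` gives `f' = -g` and `g' = (1 - r²) f = s² f`, so `f` is a harmonic
oscillator of frequency `s`; the initial data `f(0) = 0`, `g(0) = -r⁴ s` force
`f = r⁴ sin(st)`: the deviations `φ = f - r⁴ sin(st)`, `ψ = g + r⁴ s cos(st)` solve the
same system with zero data, and their energy `s² φ² + ψ²` is conserved. Then
`Z₃' = -s f` integrates to `r⁴ cos(st)`, while `Z₄' = 0` because `x₄ = 0`.
Finally `0 < 2πs < 2π`, so `cos(2πs) ≠ 1`.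
-/

lemma eq_of_hasDerivAt_zero {f : ℝ → ℝ} (h : ∀ t, HasDerivAt f 0 t) (t : ℝ) : f t = f 0 :=
  is_const_of_deriv_eq_zero (fun u => (h u).differentiableAt) (fun u => (h u).deriv) t 0

lemma oscillator_eq_zero {ω : ℝ} {φ ψ : ℝ → ℝ}
    (hφ : ∀ t, HasDerivAt φ (-ψ t) t) (hψ : ∀ t, HasDerivAt ψ (ω ^ 2 * φ t) t)
    (hφ0 : φ 0 = 0) (hψ0 : ψ 0 = 0) (t : ℝ) : φ t = 0 := by
  have hE : ∀ t, HasDerivAt (fun u => ω ^ 2 * φ u ^ 2 + ψ u ^ 2) 0 t := fun t => by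
    refine ((((hφ t).pow 2).const_mul (ω ^ 2)).add ((hψ t).pow 2)).congr_deriv ?_
    push_cast
    ring
  have hψ_zero : ∀ t, ψ t = 0 := fun t => by
    have := eq_of_hasDerivAt_zero hE t
    simp only [hφ0, hψ0, ne_eq, OfNat.ofNat_ne_zero, not_false_eq_true, zero_pow,
      mul_zero, add_zero] at this
    nlinarith [sq_nonneg (ω * φ t), sq_nonneg (ψ t)]
  have hφ' : ∀ t, HasDerivAt φ 0 t := fun t => by simpa [hψ_zero t] using hφ t
  rw [eq_of_hasDerivAt_zero hφ' t, hφ0]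

lemma hasDerivAt_const_mul_sin_mul (c s t : ℝ) :
    HasDerivAt (fun u => c * sin (s * u)) (c * s * cos (s * t)) t := by
  refine (((hasDerivAt_sin (s * t)).comp t ((hasDerivAt_id t).const_mul s)).const_mul c
    ).congr_deriv ?_
  simp only [mul_one]
  ring

lemma hasDerivAt_const_mul_cos_mul (c s t : ℝ) :
    HasDerivAt (fun u => c * cos (s * u)) (-(c * s * sin (s * t))) t := by
  refine (((hasDerivAt_cos (s * t)).comp t ((hasDerivAt_id t).const_mul s)).const_mul c
    ).congr_deriv ?_
  simp only [mul_one]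
  ring

lemma cos_two_pi_mul_ne_one {s : ℝ} (hs0 : 0 < s) (hs1 : s < 1) : cos (2 * π * s) ≠ 1 := by
  rw [Ne, cos_eq_one_iff_of_lt_of_lt (by nlinarith [pi_pos]) (by nlinarith [pi_pos])]
  exact mul_ne_zero (by positivity) hs0.ne'

noncomputable def loop (r s t : ℝ) : Fin 8 → ℝ := ![r * cos t, r * sin t, 0, s, 0, 0, 0, 0]

lemma hasDerivAt_loop (r s t : ℝ) :
    HasDerivAt (loop r s) ![-(r * sin t), r * cos t, 0, 0, 0, 0, 0, 0] t := by
  rw [hasDerivAt_pi]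
  intro i
  fin_cases i
  · simpa [loop, mul_comm] using (hasDerivAt_cos t).const_mul r
  · simpa [loop, mul_comm] using (hasDerivAt_sin t).const_mul r
  all_goals exact hasDerivAt_const t _

noncomputable def velocityPairing (r : ℝ) (Z : ℝ → Fin 8 → ℝ) (t : ℝ) : ℝ :=
  -(r * sin t) * Z t 0 + r * cos t * Z t 1

noncomputable def planarPairing (r : ℝ) (Z : ℝ → Fin 8 → ℝ) (t : ℝ) : ℝ :=
  r * cos t * Z t 0 + r * sin t * Z t 1

lemma sum_deriv_loop_mul (r s t : ℝ) (Z : ℝ → Fin 8 → ℝ) :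
    ∑ i, deriv (loop r s) t i * Z t i = velocityPairing r Z t := by
  rw [Fin.sum_univ_eight, (hasDerivAt_loop r s t).deriv]
  simp [velocityPairing]

section ParallelTransport

variable {r s : ℝ} {Z : ℝ → Fin 8 → ℝ}
  (hode : ∀ t, HasDerivAt Z (-(∑ i, deriv (loop r s) t i * Z t i) • loop r s t) t)
include hode

lemma hasDerivAt_coord (i : Fin 8) (t : ℝ) :
    HasDerivAt (fun u => Z u i) (-(velocityPairing r Z t) * loop r s t i) t := by
  simpa [sum_deriv_loop_mul] using hasDerivAt_pi.1 (hode t) i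

lemma coord_eq_of_loop_eq_zero {i : Fin 8} (hi : ∀ t, loop r s t i = 0) (t : ℝ) :
    Z t i = Z 0 i :=
  eq_of_hasDerivAt_zero (fun t => by simpa [hi t] using hasDerivAt_coord hode i t) t

lemma hasDerivAt_velocityPairing (t : ℝ) :
    HasDerivAt (velocityPairing r Z) (-planarPairing r Z t) t := by
  have h0 := hasDerivAt_coord hode 0 t
  have h1 := hasDerivAt_coord hode 1 t
  refine ((((hasDerivAt_sin t).const_mul r).neg.mul h0).add
    (((hasDerivAt_cos t).const_mul r).mul h1)).congr_deriv ?_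
  simp only [planarPairing, loop, Pi.neg_apply, Matrix.cons_val_zero, Matrix.cons_val_one]
  ring

lemma hasDerivAt_planarPairing (t : ℝ) :
    HasDerivAt (planarPairing r Z) ((1 - r ^ 2) * velocityPairing r Z t) t := by
  have h0 := hasDerivAt_coord hode 0 t
  have h1 := hasDerivAt_coord hode 1 t
  refine ((((hasDerivAt_cos t).const_mul r).mul h0).add
    (((hasDerivAt_sin t).const_mul r).mul h1)).congr_deriv ?_
  simp only [velocityPairing, loop, Matrix.cons_val_zero, Matrix.cons_val_one]
  linear_combination (-(r ^ 2) * (-(r * sin t) * Z t 0 + r * cos t * Z t 1)) *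
    sin_sq_add_cos_sq t

lemma velocityPairing_eq (hrs : 1 - r ^ 2 = s ^ 2) {c : ℝ}
    (hf0 : velocityPairing r Z 0 = 0) (hg0 : planarPairing r Z 0 = -(c * s)) (t : ℝ) :
    velocityPairing r Z t = c * sin (s * t) := by
  have hφ : ∀ t, HasDerivAt (fun u => velocityPairing r Z u - c * sin (s * u))
      (-(planarPairing r Z t + c * s * cos (s * t))) t := fun t => by
    refine ((hasDerivAt_velocityPairing hode t).sub
      (hasDerivAt_const_mul_sin_mul c s t)).congr_deriv ?_
    ring
  have hψ : ∀ t, HasDerivAt (fun u => planarPairing r Z u + c * s * cos (s * u))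
      (s ^ 2 * (velocityPairing r Z t - c * sin (s * t))) t := fun t => by
    refine ((hasDerivAt_planarPairing hode t).add
      (hasDerivAt_const_mul_cos_mul (c * s) s t)).congr_deriv ?_
    rw [hrs]
    ring
  have := oscillator_eq_zero hφ hψ (by simp [hf0]) (by simp [hg0]) t
  linarith

lemma coord_three_eq {c : ℝ} (hf : ∀ t, velocityPairing r Z t = c * sin (s * t)) (t : ℝ) :
    Z t 3 = Z 0 3 + c * (cos (s * t) - 1) := by
  have h : ∀ t, HasDerivAt (fun u => Z u 3 - c * cos (s * u)) 0 t := fun t => by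
    refine ((hasDerivAt_coord hode 3 t).sub
      (hasDerivAt_const_mul_cos_mul c s t)).congr_deriv ?_
    simp only [hf t, loop, Matrix.cons_val]
    ring
  have := eq_of_hasDerivAt_zero h t
  simp only [mul_zero, cos_zero, mul_one] at this
  linarith

end ParallelTransport

/-- Along the loop `x_t = (r cos t, r sin t, 0, s, 0, 0, 0, 0)` on `S⁷`, the parallel
transport `Z` of `Z₀ = (-r³s, 0, 0, r⁴, r³s, 0, 0, r²s²)` has constant fifth coordinate
`r³s`, fourth coordinate `r⁴ cos(st)`, and in particular the fourth coordinate of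
`Z(2π)` is `r⁴ cos(2πs) ≠ r⁴`. -/
theorem stmt_19 (r : ℝ) (hr : r ∈ Set.Ioo (0 : ℝ) 1) (s : ℝ)
    (hs : s = Real.sqrt (1 - r ^ 2))
    (x : ℝ → (Fin 8 → ℝ))
    (hx : x = fun t => ![r * Real.cos t, r * Real.sin t, 0, s, 0, 0, 0, 0])
    (Z : ℝ → (Fin 8 → ℝ))
    (hode : ∀ t, HasDerivAt Z (-(∑ i, deriv x t i * Z t i) • x t) t)
    (hinit : Z 0 = ![-(r ^ 3 * s), 0, 0, r ^ 4, r ^ 3 * s, 0, 0, r ^ 2 * s ^ 2]) :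
    (∀ t, Z t 4 = r ^ 3 * s) ∧
    (∀ t, Z t 3 = r ^ 4 * Real.cos (s * t)) ∧
    Z (2 * π) 3 = r ^ 4 * Real.cos (2 * π * s) ∧
    Z (2 * π) 3 ≠ r ^ 4 := by
  obtain ⟨hr0, hr1⟩ := hr
  have hr2 : 0 < 1 - r ^ 2 := by nlinarith
  have hrs : 1 - r ^ 2 = s ^ 2 := by rw [hs, sq_sqrt hr2.le]
  have hs0 : 0 < s := hs ▸ sqrt_pos.2 hr2
  have hs1 : s < 1 := by nlinarith
  replace hode : ∀ t, HasDerivAt Z (-(∑ i, deriv (loop r s) t i * Z t i) • loop r s t) t := by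
    subst hx
    exact hode
  have hf := velocityPairing_eq hode hrs (c := r ^ 4)
    (by simp [velocityPairing, hinit]) (by simp [planarPairing, hinit]; ring)
  have hZ3 : ∀ t, Z t 3 = r ^ 4 * cos (s * t) := fun t => by
    rw [coord_three_eq hode hf, hinit]
    simp only [Matrix.cons_val]
    ring
  refine ⟨fun t => ?_, hZ3, by rw [hZ3, mul_comm s], ?_⟩
  · rw [coord_eq_of_loop_eq_zero hode (fun t => rfl), hinit]
    simp
  · rw [hZ3, mul_comm s, Ne, mul_eq_left₀ (by positivity)]
    exact cos_two_pi_mul_ne_one hs0 hs1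
end
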